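/- arXiv:1506.06229 — 6 statements merged into one kernel-verified Lean document; each statement's English description precedes it below -/
import Mathlib

section
/- With the dihedral group G = C_e ⋊ S₂ acting on B = ℂ[x₁,x₂] as above, the polynomial ring B is a free module over the invariant ring A = ℂ[x₁^e + x₂^e, x₁x₂] with basis {1, x₁^i, x₂^i (1 ≤ i ≤ e−1), x₁^e − x₂^e}. -/
/-!
Spanning: `xy` and `x^e + y^e` lie in `A`, so `x^a y^b = (xy)·x^(a-1) y^(b-1)` and, for `n > e`,
`x^n = (x^e + y^e)·x^(n-e) - (xy)·x^(n-e-1) y^(e-1)` reduce every monomial to the listed elements,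
together with `x^e = ((x^e + y^e) + (x^e - y^e)) / 2`.

Independence: the `2e` elements `g` of the dihedral group fix `A`, so an `A`-linear relation
`∑ c_p f_p = 0` gives `M c = 0` for the matrix `M = (g f_p)_{g,p}` over the domain `ℂ[x,y]`.
Evaluating `M` at `(1,0)` turns the rows of `ρ^a` and `ρ^a σ` into the values of the family at
`(ε^a, 0)` and `(0, ε^a)`, which are two Vandermonde systems in the `e`-th roots of unity, so
`det M ≠ 0`.
-/

open MvPolynomial

/-- The invariant ring `A = ℂ[x₁^e + x₂^e, x₁x₂]` of the dihedral group of order `2e`. -/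
noncomputable def dihedralInv (e : ℕ) : Subalgebra ℂ (MvPolynomial (Fin 2) ℂ) :=
  Algebra.adjoin ℂ
    ({(X 0 : MvPolynomial (Fin 2) ℂ) ^ e + X 1 ^ e, X 0 * X 1} :
      Set (MvPolynomial (Fin 2) ℂ))

/-- The family `1, x₁^i, x₂^i (1 ≤ i ≤ e-1), x₁^e - x₂^e` of `2e` elements of `ℂ[x₁,x₂]`,
indexed by `Fin 2 × Fin e`. -/
noncomputable def dihedralBasisFam (e : ℕ) : Fin 2 × Fin e → MvPolynomial (Fin 2) ℂ :=
  fun p =>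
    if p.1 = 0 then
      (if (p.2 : ℕ) = 0 then 1 else X 0 ^ (p.2 : ℕ))
    else
      (if (p.2 : ℕ) = 0 then X 0 ^ e - X 1 ^ e else X 1 ^ (p.2 : ℕ))

theorem linearIndependent_of_det_ne_zero {ι A B : Type*} [Fintype ι] [DecidableEq ι]
    [CommRing A] [CommRing B] [IsDomain B] [Algebra A B]
    (hA : Function.Injective (algebraMap A B)) (L : ι → B →ₗ[A] B) (f : ι → B)
    (hdet : (Matrix.of fun q p => L q (f p)).det ≠ 0) : LinearIndependent A f := by
  rw [Fintype.linearIndependent_iff]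
  intro c hc p
  have hker : (Matrix.of fun q p => L q (f p)).mulVec (fun p => algebraMap A B (c p)) = 0 := by
    funext q
    have h := congrArg (L q) hc
    simp only [map_sum, map_smul, map_zero] at h
    simpa [Matrix.mulVec, dotProduct, Algebra.smul_def, mul_comm] using h
  exact hA (by simpa using congrFun (Matrix.eq_zero_of_mulVec_eq_zero hdet hker) p)

def AlgHom.linearMapOfFixes {R B : Type*} [CommRing R] [CommRing B] [Algebra R B]
    (S : Subalgebra R B) (φ : B →ₐ[R] B) (hφ : ∀ a ∈ S, φ a = a) : B →ₗ[S] B where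
  toFun := φ
  map_add' := map_add φ
  map_smul' a b := by simp [Subalgebra.smul_def, hφ a a.2]

namespace Dihedral

variable {e : ℕ}

theorem X_pow_add_X_pow_mem_dihedralInv {i j : Fin 2} (hij : i ≠ j) :
    X i ^ e + X j ^ e ∈ dihedralInv e := by
  fin_cases i <;> fin_cases j <;> simp only [ne_eq, not_true_eq_false] at hij
  · exact Algebra.subset_adjoin (.inl rfl)
  · exact add_comm (X 0 ^ e) (X 1 ^ e : MvPolynomial (Fin 2) ℂ) ▸
      Algebra.subset_adjoin (.inl rfl)

theorem X_mul_X_mem_dihedralInv {i j : Fin 2} (hij : i ≠ j) : X i * X j ∈ dihedralInv e := by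
  fin_cases i <;> fin_cases j <;> simp only [ne_eq, not_true_eq_false] at hij
  · exact Algebra.subset_adjoin (.inr rfl)
  · exact mul_comm (X 0) (X 1 : MvPolynomial (Fin 2) ℂ) ▸ Algebra.subset_adjoin (.inr rfl)

theorem map_eq_self_of_mem_dihedralInv
    {φ : MvPolynomial (Fin 2) ℂ →ₐ[ℂ] MvPolynomial (Fin 2) ℂ}
    (hs : φ (X 0 ^ e + X 1 ^ e) = X 0 ^ e + X 1 ^ e) (ht : φ (X 0 * X 1) = X 0 * X 1) :
    ∀ a ∈ dihedralInv e, φ a = a := fun _ ha =>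
  AlgHom.adjoin_le_equalizer φ (AlgHom.id ℂ _) (by rintro _ (rfl | rfl) <;> assumption) ha

/-- For `ζ` an `e`-th root of unity these are the `2e` elements of the dihedral group:
`x ↦ ζ x, y ↦ ζ⁻¹ y`, preceded by the swap `x ↔ y` when `δ = 1`. -/
noncomputable def dihedralMap (ζ : ℂ) (δ : Fin 2) :
    MvPolynomial (Fin 2) ℂ →ₐ[ℂ] MvPolynomial (Fin 2) ℂ :=
  (aeval ![C ζ * X 0, C ζ⁻¹ * X 1]).comp (rename (Equiv.swap 0 δ))

theorem dihedralMap_eq_self_of_mem {ζ : ℂ} (hζ : ζ ^ e = 1) (hζ0 : ζ ≠ 0) (δ : Fin 2) :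
    ∀ a ∈ dihedralInv e, dihedralMap ζ δ a = a := by
  apply map_eq_self_of_mem_dihedralInv
  · fin_cases δ <;> simp [dihedralMap, mul_pow, ← C_pow, hζ, add_comm]
  · fin_cases δ <;> simp [dihedralMap, mul_mul_mul_comm, ← C_mul, hζ0, mul_comm]

theorem aeval_comp_dihedralMap (ζ : ℂ) (δ : Fin 2) :
    (aeval (Pi.single 0 1)).comp (dihedralMap ζ δ) = aeval (Pi.single δ ζ) := by
  apply algHom_ext
  intro i
  fin_cases δ <;> fin_cases i <;> simp [dihedralMap]

section Span

variable {M : Submodule (dihedralInv e) (MvPolynomial (Fin 2) ℂ)}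

theorem mul_mem_of_mem_dihedralInv {a z : MvPolynomial (Fin 2) ℂ} (ha : a ∈ dihedralInv e)
    (hz : z ∈ M) : a * z ∈ M :=
  M.smul_mem ⟨a, ha⟩ hz

theorem X_pow_mem_of_lt (hM : ∀ p, dihedralBasisFam e p ∈ M) (i : Fin 2) {n : ℕ}
    (hn : n < e) : X i ^ n ∈ M := by
  rcases Nat.eq_zero_or_pos n with rfl | hn0
  · simpa [dihedralBasisFam] using hM (0, ⟨0, hn⟩)
  · fin_cases i
    · simpa [dihedralBasisFam, hn0.ne'] using hM (0, ⟨n, hn⟩)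
    · simpa [dihedralBasisFam, hn0.ne'] using hM (1, ⟨n, hn⟩)

theorem X_pow_sub_X_pow_mem (hM : ∀ p, dihedralBasisFam e p ∈ M) (he : 1 ≤ e) {i j : Fin 2}
    (hij : i ≠ j) : X i ^ e - X j ^ e ∈ M := by
  have hD : X 0 ^ e - X 1 ^ e ∈ M := by simpa [dihedralBasisFam] using hM (1, ⟨0, he⟩)
  fin_cases i <;> fin_cases j <;> simp only [ne_eq, not_true_eq_false] at hij
  · exact hD
  · simpa using M.neg_mem hD

theorem X_pow_self_mem (hM : ∀ p, dihedralBasisFam e p ∈ M) (he : 1 ≤ e) {i j : Fin 2}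
    (hij : i ≠ j) : X i ^ e ∈ M := by
  have hsum : (X i ^ e + X j ^ e) * 1 + (X i ^ e - X j ^ e) ∈ M :=
    M.add_mem (mul_mem_of_mem_dihedralInv (X_pow_add_X_pow_mem_dihedralInv hij)
      (X_pow_mem_of_lt hM 0 he)) (X_pow_sub_X_pow_mem hM he hij)
  convert M.smul_of_tower_mem (2⁻¹ : ℂ) hsum using 1
  rw [smul_eq_C_mul]
  have h2 : (C (2⁻¹ : ℂ) : MvPolynomial (Fin 2) ℂ) * 2 = 1 := by
    rw [← map_ofNat C 2, ← C_mul]; norm_num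
  linear_combination (-X i ^ e) * h2

theorem X_pow_mem_of_forall_lt (hM : ∀ p, dihedralBasisFam e p ∈ M) (he : 1 ≤ e) {i j : Fin 2}
    (hij : i ≠ j) (n : ℕ) (ih : ∀ a b, a + b < n → X i ^ a * X j ^ b ∈ M) :
    X i ^ n ∈ M := by
  rcases lt_trichotomy n e with hn | rfl | hn
  · exact X_pow_mem_of_lt hM i hn
  · exact X_pow_self_mem hM he hij
  obtain ⟨m, rfl⟩ : ∃ m, n = e + m + 1 := ⟨n - e - 1, by omega⟩
  obtain ⟨d, rfl⟩ : ∃ d, e = d + 1 := ⟨e - 1, by omega⟩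
  have h : (X i ^ (d + 1 + m + 1) : MvPolynomial (Fin 2) ℂ) =
      (X i ^ (d + 1) + X j ^ (d + 1)) * (X i ^ (m + 1) * X j ^ 0) -
        X i * X j * (X i ^ m * X j ^ d) := by ring
  rw [h]
  exact M.sub_mem
    (mul_mem_of_mem_dihedralInv (X_pow_add_X_pow_mem_dihedralInv hij) (ih _ _ (by omega)))
    (mul_mem_of_mem_dihedralInv (X_mul_X_mem_dihedralInv hij) (ih _ _ (by omega)))

theorem X_pow_mul_X_pow_mem (hM : ∀ p, dihedralBasisFam e p ∈ M) (he : 1 ≤ e) {i j : Fin 2}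
    (hij : i ≠ j) (a b : ℕ) : X i ^ a * X j ^ b ∈ M := by
  induction hn : a + b using Nat.strong_induction_on generalizing i j a b with
  | _ n ih =>
    rcases b with _ | b
    · rw [pow_zero, mul_one]
      exact X_pow_mem_of_forall_lt hM he hij a fun c d h => ih _ (by omega) hij c d rfl
    rcases a with _ | a
    · rw [pow_zero, one_mul]
      exact X_pow_mem_of_forall_lt hM he hij.symm _ fun c d h => ih _ (by omega) hij.symm c d rfl
    have h : (X i ^ (a + 1) * X j ^ (b + 1) : MvPolynomial (Fin 2) ℂ) =
        X i * X j * (X i ^ a * X j ^ b) := by ring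
    rw [h]
    exact mul_mem_of_mem_dihedralInv (X_mul_X_mem_dihedralInv hij) (ih _ (by omega) hij a b rfl)

theorem eq_top_of_forall_dihedralBasisFam_mem (hM : ∀ p, dihedralBasisFam e p ∈ M)
    (he : 1 ≤ e) : M = ⊤ := by
  refine Submodule.eq_top_iff'.mpr fun p => ?_
  induction p using MvPolynomial.induction_on' with
  | monomial u c =>
    rw [monomial_eq, Finsupp.prod_fintype _ _ fun _ => pow_zero _, Fin.prod_univ_two, C_mul']
    exact M.smul_of_tower_mem c (X_pow_mul_X_pow_mem hM he zero_ne_one _ _)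
  | add p q hp hq => exact M.add_mem hp hq

end Span

theorem det_aeval_single_dihedralBasisFam_ne_zero (ζ : Fin e → ℂ)
    (hζ : Function.Injective ζ) (hζe : ∀ a, ζ a ^ e = 1) :
    (Matrix.of fun (q p : Fin 2 × Fin e) =>
      aeval (Pi.single q.1 (ζ q.2)) (dihedralBasisFam e p)).det ≠ 0 := by
  rcases e with _ | n
  · simp
  intro hdet
  obtain ⟨v, hv0, hv⟩ := Matrix.exists_mulVec_eq_zero_iff.mpr hdet
  -- At `(z, 0)` the family takes the values `1, z^k, z^e = 1, 0` and at `(0, z)` the values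
  -- `1, 0, -z^e = -1, z^k`: both row blocks are Vandermonde systems in the `ζ a`.
  have h0 : (Fin.cons (v (0, 0) + v (1, 0)) fun k => v (0, k.succ) : Fin (n + 1) → ℂ) = 0 :=
    Matrix.eq_zero_of_forall_index_sum_pow_mul_eq_zero hζ fun a => by
      simpa [Matrix.mulVec, dotProduct, Fintype.sum_prod_type, Fin.sum_univ_succ,
        dihedralBasisFam, hζe, add_right_comm] using congrFun hv (0, a)
  have h1 : (Fin.cons (v (0, 0) - v (1, 0)) fun k => v (1, k.succ) : Fin (n + 1) → ℂ) = 0 :=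
    Matrix.eq_zero_of_forall_index_sum_pow_mul_eq_zero hζ fun a => by
      simpa [Matrix.mulVec, dotProduct, Fintype.sum_prod_type, Fin.sum_univ_succ,
        dihedralBasisFam, hζe, sub_eq_add_neg, add_assoc] using congrFun hv (1, a)
  have e0 := congrFun h0 0
  have e1 := congrFun h1 0
  simp only [Fin.cons_zero, Pi.zero_apply] at e0 e1
  apply hv0
  funext ⟨γ, k⟩
  cases k using Fin.cases with
  | zero =>
    fin_cases γ
    · show v (0, 0) = 0; linear_combination (e0 + e1) / 2
    · show v (1, 0) = 0; linear_combination (e0 - e1) / 2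
  | succ k =>
    fin_cases γ
    · simpa using congrFun h0 k.succ
    · simpa using congrFun h1 k.succ

theorem linearIndependent_dihedralBasisFam (he : 1 ≤ e) :
    LinearIndependent (dihedralInv e) (dihedralBasisFam e) := by
  obtain ⟨ε, hε⟩ : ∃ ε : ℂ, IsPrimitiveRoot ε e := ⟨_, Complex.isPrimitiveRoot_exp e (by omega)⟩
  have hζ : ∀ a : Fin e, (ε ^ (a : ℕ)) ^ e = 1 := fun a => by
    rw [← pow_mul, mul_comm, pow_mul, hε.pow_eq_one, one_pow]
  have hζ0 : ∀ a : Fin e, ε ^ (a : ℕ) ≠ 0 := fun a => pow_ne_zero _ (hε.ne_zero (by omega))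
  have hinj : Function.Injective (algebraMap (dihedralInv e) (MvPolynomial (Fin 2) ℂ)) :=
    Subtype.val_injective
  let L : Fin 2 × Fin e → MvPolynomial (Fin 2) ℂ →ₗ[dihedralInv e] MvPolynomial (Fin 2) ℂ :=
    fun q => (dihedralMap (ε ^ (q.2 : ℕ)) q.1).linearMapOfFixes _
      (dihedralMap_eq_self_of_mem (hζ q.2) (hζ0 q.2) q.1)
  refine linearIndependent_of_det_ne_zero hinj L _ fun hdet => ?_
  refine det_aeval_single_dihedralBasisFam_ne_zero (fun a : Fin e => ε ^ (a : ℕ))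
    (fun a b h => Fin.ext (hε.pow_inj a.2 b.2 h)) hζ ?_
  have h := congrArg (aeval (Pi.single 0 1 : Fin 2 → ℂ)) hdet
  rw [AlgHom.map_det, map_zero] at h
  convert h using 2
  ext q p
  exact (congrFun (congrArg DFunLike.coe (aeval_comp_dihedralMap _ q.1)) _).symm

end Dihedral

/-- `B = ℂ[x₁,x₂]` is a free module over `A = ℂ[x₁^e + x₂^e, x₁x₂]` with basis
`{1, x₁^i, x₂^i (1 ≤ i ≤ e-1), x₁^e - x₂^e}`. -/
theorem stmt5 (e : ℕ) (he : 1 ≤ e) :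
    ∃ b : Module.Basis (Fin 2 × Fin e) (dihedralInv e) (MvPolynomial (Fin 2) ℂ),
      ∀ p, b p = dihedralBasisFam e p := by
  have hli := Dihedral.linearIndependent_dihedralBasisFam he
  have hsp : Submodule.span (dihedralInv e) (Set.range (dihedralBasisFam e)) = ⊤ :=
    Dihedral.eq_top_of_forall_dihedralBasisFam_mem (fun p => Submodule.subset_span ⟨p, rfl⟩) he
  exact ⟨.mk hli hsp.ge, Module.Basis.mk_apply hli hsp.ge⟩
end

section
/- Let P = {P₁, …, P_r} be a partition of the set {1,…,n} and let s_P = ∏_j ∏_{k<l ∈ P_j} (x_k − x_l) be its Specht polynomial in ℂ[x₁,…,x_n]. If x^α (with α: {1,…,n} → ℕ) is a monomial occurring with nonzero coefficient in the expansion of s_P, then the partition of n obtained by sorting the multiset of fiber sizes λ^α_i = #{j : α(j) = i} is the conjugate partition of the partition (|P₁|, …, |P_r|) of n. -/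
/-!
Each block factor of `s_P` is, up to sign, the Vandermonde determinant in the variables of the
block, so each of its monomials is `x_{j₀}^0 x_{j₁}^1 ⋯ x_{j_{m-1}}^{m-1}` for an enumeration
`j₀, …, j_{m-1}` of the block. A monomial of `s_P` is a product of one such monomial per block,
and the blocks are disjoint, so the exponent `i` is carried by exactly one variable in each block
of size `> i` and by no other variable.
-/

open MvPolynomial

/-- The Specht polynomial `s_P = ∏_j ∏_{k<l ∈ P_j} (x_k - x_l)` of a set partition `P`
of `{1,…,n}`. -/
noncomputable def spechtPoly (n : ℕ) (P : Finpartition (Finset.univ : Finset (Fin n))) :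
    MvPolynomial (Fin n) ℂ :=
  ∏ b ∈ P.parts, ∏ p ∈ b.offDiag.filter (fun p => p.1 < p.2), (X p.1 - X p.2)

open Finset

theorem Finset.prod_offDiag_filter_lt {α M : Type*} [LinearOrder α] [CommMonoid M]
    (s : Finset α) (f : α → α → M) :
    ∏ p ∈ s.offDiag.filter (fun p => p.1 < p.2), f p.1 p.2 =
      ∏ i : Fin #s, ∏ j ∈ Ioi i, f (s.orderEmbOfFin rfl i) (s.orderEmbOfFin rfl j) := by
  set e := s.orderEmbOfFin rfl
  rw [prod_sigma' univ (fun i => Ioi i) (fun i j => f (e i) (e j))]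
  symm
  refine prod_bij (fun p _ => (e p.1, e p.2)) ?_ ?_ ?_ (fun _ _ => rfl)
  · rintro ⟨i, j⟩ hij
    simp only [mem_sigma, mem_univ, mem_Ioi, true_and] at hij
    simp [e.lt_iff_lt.mpr hij, (e.lt_iff_lt.mpr hij).ne, e]
  · rintro ⟨i, j⟩ - ⟨i', j'⟩ - h
    simp only [Prod.mk.injEq, EmbeddingLike.apply_eq_iff_eq] at h
    obtain ⟨rfl, rfl⟩ := h
    rfl
  · rintro ⟨x, y⟩ hxy
    simp only [mem_filter, mem_offDiag] at hxy
    obtain ⟨⟨hx, hy, -⟩, hlt⟩ := hxy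
    obtain ⟨i, rfl⟩ : x ∈ Set.range e := by simpa [e, range_orderEmbOfFin] using hx
    obtain ⟨j, rfl⟩ : y ∈ Set.range e := by simpa [e, range_orderEmbOfFin] using hy
    exact ⟨⟨i, j⟩, by simpa using e.lt_iff_lt.mp hlt, rfl⟩

theorem Fin.card_filter_val_eq (m i : ℕ) :
    #{k : Fin m | (k : ℕ) = i} = if i < m then 1 else 0 := by
  split_ifs with hi
  · exact card_eq_one.mpr ⟨⟨i, hi⟩, by ext; simp [Fin.ext_iff]⟩
  · exact card_eq_zero.mpr <| filter_eq_empty_iff.mpr fun k _ hk => hi (hk ▸ k.isLt)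

theorem Finpartition.card_filter_eq_sum_card_filter {α : Type*} [DecidableEq α] {s : Finset α}
    (P : Finpartition s) (p : α → Prop) [DecidablePred p] :
    #(s.filter p) = ∑ b ∈ P.parts, #(b.filter p) := by
  conv_lhs => rw [← P.biUnion_parts]
  rw [filter_biUnion, card_biUnion]
  · rfl
  · exact fun b hb c hc hbc =>
      (P.disjoint hb hc hbc).mono (filter_subset _ _) (filter_subset _ _)

section
variable {σ : Type*} {m : ℕ} (ψ : Fin m ↪ σ)

theorem Finsupp.sum_single_val_apply_self (k : Fin m) :
    (∑ i, Finsupp.single (ψ i) (i : ℕ)) (ψ k) = k := by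
  classical
  simp [Finsupp.finsetSum_apply, Finsupp.single_apply, ψ.injective.eq_iff]

theorem Finsupp.sum_single_val_apply_of_notMem {j : σ} (hj : j ∉ Set.range ψ) :
    (∑ i, Finsupp.single (ψ i) (i : ℕ)) j = 0 := by
  classical
  simp only [Finsupp.finsetSum_apply, Finsupp.single_apply]
  exact sum_eq_zero fun k _ => if_neg fun hk => hj ⟨k, hk⟩

end

namespace MvPolynomial

section CommSemiring

variable {R σ ι : Type*} [CommSemiring R]

theorem coeff_prod [DecidableEq ι] [DecidableEq σ] (f : ι → MvPolynomial σ R) (d : σ →₀ ℕ)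
    (s : Finset ι) :
    coeff d (∏ j ∈ s, f j) = ∑ l ∈ finsuppAntidiag s d, ∏ i ∈ s, coeff (l i) (f i) := by
  rw [← coeff_coe, ← coeToMvPowerSeries.ringHom_apply, map_prod, MvPowerSeries.coeff_prod]
  simp only [coeToMvPowerSeries.ringHom_apply, coeff_coe]

theorem exists_sum_eq_of_coeff_prod_ne_zero {s : Finset ι} {f : ι → MvPolynomial σ R}
    {d : σ →₀ ℕ} (h : coeff d (∏ j ∈ s, f j) ≠ 0) :
    ∃ l : ι → σ →₀ ℕ, ∑ i ∈ s, l i = d ∧ ∀ i ∈ s, coeff (l i) (f i) ≠ 0 := by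
  classical
  rw [coeff_prod] at h
  obtain ⟨l, hl, hprod⟩ := exists_ne_zero_of_sum_ne_zero h
  exact ⟨l, (mem_finsuppAntidiag.mp hl).1, fun i hi hzero => hprod (prod_eq_zero hi hzero)⟩

end CommSemiring

section CommRing

variable {R σ : Type*} [CommRing R]

theorem exists_perm_of_coeff_det_vandermonde_ne_zero {m : ℕ} (e : Fin m → σ)
    {d : σ →₀ ℕ} (h : coeff d (Matrix.vandermonde fun i => (X (e i) : MvPolynomial σ R)).det ≠ 0) :
    ∃ τ : Equiv.Perm (Fin m), d = ∑ i, Finsupp.single (e (τ i)) (i : ℕ) := by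
  classical
  rw [Matrix.det_apply, coeff_sum] at h
  obtain ⟨τ, -, hτ⟩ := exists_ne_zero_of_sum_ne_zero h
  refine ⟨τ, ?_⟩
  have hmono : ∏ i, Matrix.vandermonde (fun i => (X (e i) : MvPolynomial σ R)) (τ i) i =
      monomial (∑ i, Finsupp.single (e (τ i)) (i : ℕ)) 1 := by
    simp only [Matrix.vandermonde_apply, X_pow_eq_monomial, monomial_sum_one]
  contrapose! hτ
  rw [hmono, Units.smul_def, coeff_smul, coeff_monomial, if_neg hτ.symm, smul_zero]

theorem exists_embedding_of_coeff_prod_sub_ne_zero [LinearOrder σ] (b : Finset σ)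
    {d : σ →₀ ℕ}
    (h : coeff d (∏ p ∈ b.offDiag.filter (fun p => p.1 < p.2),
      (X p.1 - X p.2 : MvPolynomial σ R)) ≠ 0) :
    ∃ ψ : Fin #b ↪ σ, univ.map ψ = b ∧ d = ∑ i, Finsupp.single (ψ i) (i : ℕ) := by
  set e := b.orderEmbOfFin rfl
  have hsign : ∏ p ∈ b.offDiag.filter (fun p => p.1 < p.2), (X p.1 - X p.2 : MvPolynomial σ R) =
      (-1) ^ (∑ i : Fin #b, #(Ioi i)) * (Matrix.vandermonde fun i => X (e i)).det := by
    rw [prod_offDiag_filter_lt b (fun x y => X x - X y), Matrix.det_vandermonde,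
      ← prod_pow_eq_pow_sum, ← prod_mul_distrib]
    simp only [← prod_neg, neg_sub, e]
  obtain ⟨τ, hτ⟩ : ∃ τ : Equiv.Perm (Fin #b), d = ∑ i, Finsupp.single (e (τ i)) (i : ℕ) := by
    refine exists_perm_of_coeff_det_vandermonde_ne_zero (R := R) e ?_
    rcases neg_one_pow_eq_or (MvPolynomial σ R) (∑ i : Fin #b, #(Ioi i)) with hpm | hpm <;>
      rw [hsign, hpm] at h <;> simpa using h
  refine ⟨τ.toEmbedding.trans e.toEmbedding, ?_, hτ⟩
  rw [← Finset.map_map, map_univ_equiv, map_orderEmbOfFin_univ]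

end CommRing

end MvPolynomial

/-- If `x^α` occurs with nonzero coefficient in the Specht polynomial `s_P`, then the
partition of fiber sizes of `α` is the conjugate of the partition of block sizes of `P`:
for each `i`, the number of `j` with `α(j) = i` equals the number of blocks of `P` of
size `> i`. -/
theorem stmt7 (n : ℕ) (P : Finpartition (Finset.univ : Finset (Fin n)))
    (α : Fin n →₀ ℕ) (h : MvPolynomial.coeff α (spechtPoly n P) ≠ 0) :
    ∀ i : ℕ,
      (Finset.univ.filter fun j : Fin n => α j = i).card =
        (P.parts.filter fun b => i < b.card).card := by
  obtain ⟨g, hgα, hg⟩ := exists_sum_eq_of_coeff_prod_ne_zero h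
  choose ψ hψ hgψ using fun b hb => exists_embedding_of_coeff_prod_sub_ne_zero b (hg b hb)
  have hψ_mem : ∀ b (hb : b ∈ P.parts) k, ψ b hb k ∈ b := fun b hb k =>
    subset_of_eq (hψ b hb) (mem_map_of_mem _ (mem_univ k))
  have hαψ : ∀ b (hb : b ∈ P.parts) k, α (ψ b hb k) = k := by
    intro b hb k
    rw [← hgα, Finsupp.finsetSum_apply, sum_eq_single_of_mem b hb, hgψ b hb,
      Finsupp.sum_single_val_apply_self]
    intro c hc hcb
    rw [hgψ c hc, Finsupp.sum_single_val_apply_of_notMem]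
    rintro ⟨k', hk'⟩
    exact disjoint_left.mp (P.disjoint hb hc hcb.symm) (hψ_mem b hb k) (hk' ▸ hψ_mem c hc k')
  intro i
  rw [P.card_filter_eq_sum_card_filter, card_filter]
  refine sum_congr rfl fun b hb => ?_
  conv_lhs => rw [← hψ b hb]
  rw [filter_map, card_map]
  simp only [Function.comp_def, hαψ]
  exact Fin.card_filter_val_eq _ _
end

section
/- Let z be a polynomial in ℂ[x₁,…,x_n] annihilated by the power sum differential operators p_{0,l} = ∑_{i=1}^n ∂_i^l for l = 1, …, n. Then ∂_i^n z = 0 for every i; consequently the degree of z in each variable x_i is strictly less than n. -/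
/-!
The operators `∂ᵢ` commute, so `p ↦ p(∂)` is an algebra map out of `ℂ[X₁,…,Xₙ]`, and the
polynomials `p` with `p(∂) z = 0` form an ideal. Over a `ℚ`-algebra, Newton's identities put every
`eₖ` (`1 ≤ k ≤ n`) into the ideal spanned by the power sums `p₁,…,pₙ`, and since `Xᵢ` is a root of
`∏ⱼ (t - Xⱼ) = ∑ₖ (-1)ᵏ eₖ tⁿ⁻ᵏ`, so is `Xᵢⁿ`. Hence `∂ᵢⁿ z = 0`, which bounds the `xᵢ`-degree of `z`
because `∂ᵢⁿ` multiplies the coefficient of `xᵢ^(m+n)` by a nonzero falling factorial.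
-/

open MvPolynomial

/-- The partial derivative `∂_i` as a `ℂ`-linear endomorphism of `ℂ[x₁,…,x_n]`. -/
noncomputable def pd (n : ℕ) (i : Fin n) : Module.End ℂ (MvPolynomial (Fin n) ℂ) :=
  (MvPolynomial.pderiv i).toLinearMap

open Finset

namespace MvPolynomial

section PowerSums

variable (σ R : Type*) [Fintype σ] [CommRing R]

noncomputable def powerSumIdeal : Ideal (MvPolynomial σ R) :=
  Ideal.span (psum σ R '' Set.Icc 1 (Fintype.card σ))

variable {σ R} [Algebra ℚ R]

theorem esymm_mem_powerSumIdeal {k : ℕ} (hk₀ : 1 ≤ k) (hk : k ≤ Fintype.card σ) :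
    esymm σ R k ∈ powerSumIdeal σ R := by
  have hunit : IsUnit (k : MvPolynomial σ R) := by
    simpa using (IsUnit.mk0 (k : ℚ) (by positivity)).map (algebraMap ℚ (MvPolynomial σ R))
  rw [← Ideal.unit_mul_mem_iff_mem _ hunit, mul_esymm_eq_sum]
  refine Ideal.mul_mem_left _ _ (Ideal.sum_mem _ fun a ha => Ideal.mul_mem_left _ _ ?_)
  rw [mem_filter, HasAntidiagonal.mem_antidiagonal] at ha
  exact Ideal.subset_span ⟨a.2, ⟨by omega, by omega⟩, rfl⟩

theorem X_pow_card_mem_powerSumIdeal (i : σ) :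
    X i ^ Fintype.card σ ∈ powerSumIdeal σ R := by
  have hvieta := congrArg (Polynomial.eval (-X i)) (prod_C_add_X_eq_sum_esymm R σ)
  rw [Polynomial.eval_prod, prod_eq_zero (mem_univ i) (by simp), Polynomial.eval_finsetSum,
    sum_range_succ'] at hvieta
  simp only [Polynomial.eval_mul, Polynomial.eval_C, Polynomial.eval_pow, Polynomial.eval_X,
    esymm_zero, one_mul, Nat.sub_zero] at hvieta
  have hneg : (-X i) ^ Fintype.card σ ∈ powerSumIdeal σ R := by
    refine (Ideal.add_mem_iff_right _ (Ideal.sum_mem _ fun j hj => ?_)).mp (hvieta ▸ zero_mem _)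
    exact Ideal.mul_mem_right _ _ (esymm_mem_powerSumIdeal (by omega) (by simpa using hj))
  have hsign : X i ^ Fintype.card σ =
      (-1) ^ Fintype.card σ * (-X i : MvPolynomial σ R) ^ Fintype.card σ := by
    rw [← mul_pow, neg_one_mul, neg_neg]
  exact hsign ▸ Ideal.mul_mem_left _ _ hneg

end PowerSums

section Commuting

variable {σ R A : Type*} [CommSemiring R] [Semiring A] [Algebra R A]

open scoped IsMulCommutative in
noncomputable def aevalOfCommute (a : σ → A) (ha : ∀ i j, Commute (a i) (a j)) :
    MvPolynomial σ R →ₐ[R] A :=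
  haveI := Algebra.isMulCommutative_adjoin R (s := Set.range a) <| by
    rintro _ ⟨i, rfl⟩ _ ⟨j, rfl⟩
    exact ha i j
  (Algebra.adjoin R (Set.range a)).val.comp (aeval fun i => ⟨a i, Algebra.subset_adjoin ⟨i, rfl⟩⟩)

@[simp]
theorem aevalOfCommute_X (a : σ → A) (ha : ∀ i j, Commute (a i) (a j)) (i : σ) :
    aevalOfCommute (R := R) a ha (X i) = a i := by
  simp [aevalOfCommute]

end Commuting

theorem pderiv_comm {σ R : Type*} [CommRing R] (i j : σ) (f : MvPolynomial σ R) :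
    pderiv i (pderiv j f) = pderiv j (pderiv i f) := by
  have hbracket : ⁅pderiv i, pderiv j⁆ = (0 : Derivation R (MvPolynomial σ R) _) :=
    derivation_ext fun k => by
      classical
      rw [Derivation.commutator_apply]
      simp only [pderiv_X, Pi.single_apply]
      split_ifs <;> simp
  have := congr($hbracket f)
  rwa [Derivation.commutator_apply, Derivation.zero_apply, sub_eq_zero] at this

theorem coeff_iterate_pderiv {σ R : Type*} [CommSemiring R] (i : σ) (k : ℕ)
    (f : MvPolynomial σ R) (m : σ →₀ ℕ) :
    coeff m ((pderiv i)^[k] f) = (m i + k).descFactorial k • coeff (m + Finsupp.single i k) f := by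
  induction k generalizing m with
  | zero => simp
  | succ k ih =>
    have hdeg : (m + Finsupp.single i 1 : σ →₀ ℕ) i + k = m i + (k + 1) := by
      rw [Finsupp.add_apply, Finsupp.single_eq_same]
      omega
    have hexp : m + Finsupp.single i 1 + Finsupp.single i k = m + Finsupp.single i (k + 1) := by
      rw [add_assoc, ← Finsupp.single_add, add_comm 1 k]
    rw [Function.iterate_succ_apply', coeff_pderiv, ih, hdeg, hexp, Nat.descFactorial_succ,
      show m i + (k + 1) - k = m i + 1 by omega]
    simp only [nsmul_eq_mul]
    push_cast
    ring

theorem degreeOf_lt_of_iterate_pderiv_eq_zero {σ R : Type*} [CommSemiring R] [IsAddTorsionFree R]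
    {i : σ} {k : ℕ} {f : MvPolynomial σ R} (hk : 0 < k) (hf : (pderiv i)^[k] f = 0) :
    degreeOf i f < k := by
  rw [degreeOf_lt_iff hk]
  intro s hs
  by_contra! hsk
  have hle : Finsupp.single i k ≤ s := Finsupp.single_le_iff.mpr hsk
  have hcoeff := coeff_iterate_pderiv i k f (s - Finsupp.single i k)
  rw [tsub_add_cancel_of_le hle, hf, coeff_zero, eq_comm, nsmul_eq_zero_iff_right] at hcoeff
  · exact mem_support_iff.mp hs hcoeff
  · exact Nat.descFactorial_eq_zero_iff_lt.not.mpr (by omega)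

end MvPolynomial

theorem pow_card_mem_of_forall_psum_mem {σ R A : Type*} [Fintype σ] [CommRing R] [Algebra ℚ R]
    [Ring A] [Algebra R A] {a : σ → A} (ha : ∀ i j, Commute (a i) (a j)) {I : Ideal A}
    (hI : ∀ l, 1 ≤ l → l ≤ Fintype.card σ → ∑ j, a j ^ l ∈ I) (i : σ) :
    a i ^ Fintype.card σ ∈ I := by
  have hle : powerSumIdeal σ R ≤ I.comap (aevalOfCommute a ha) := by
    refine Ideal.span_le.2 ?_
    rintro _ ⟨l, ⟨hl₀, hl⟩, rfl⟩
    simpa [psum] using hI l hl₀ hl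
  simpa using hle (X_pow_card_mem_powerSumIdeal i)

/-- If `z ∈ ℂ[x₁,…,x_n]` is annihilated by the power sums `∑_i ∂_i^l` for `l = 1,…,n`,
then `∂_i^n z = 0` for every `i`; consequently `deg_{x_i} z < n` for every `i`. -/
theorem stmt9 (n : ℕ) (hn : 1 ≤ n) (z : MvPolynomial (Fin n) ℂ)
    (h : ∀ l : ℕ, 1 ≤ l → l ≤ n → (∑ i : Fin n, (pd n i) ^ l) z = 0) :
    (∀ i : Fin n, ((pd n i) ^ n) z = 0) ∧
    (∀ i : Fin n, MvPolynomial.degreeOf i z < n) := by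
  have hcomm : ∀ i j, Commute (pd n i) (pd n j) := fun i j => LinearMap.ext (pderiv_comm i j)
  let I : Ideal (Module.End ℂ (MvPolynomial (Fin n) ℂ)) :=
    LinearMap.ker (LinearMap.toSpanSingleton _ _ z)
  have hI : ∀ T, T ∈ I ↔ T z = 0 := fun T => by simp [I]
  have hpow : ∀ i, (pd n i ^ n) z = 0 := fun i => by
    simpa [hI] using pow_card_mem_of_forall_psum_mem (R := ℂ) hcomm (I := I)
      (by simpa [hI] using h) i
  refine ⟨hpow, fun i => degreeOf_lt_of_iterate_pderiv_eq_zero hn ?_⟩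
  simpa [pd, Module.End.pow_apply] using hpow i
end

section
/- More generally, fix m ≥ 1 and consider the span of power differential operators p_{k,l} = ∑_{i=1}^n x_i^k ∂_i^l with m dividing l − k. This subspace of the Weyl algebra is closed under the commutator bracket. -/
open MvPolynomial

/-- Multiplication by `x_i` as an endomorphism of `ℂ[x₁,…,x_n]`. -/
noncomputable def mulX (n : ℕ) (i : Fin n) : Module.End ℂ (MvPolynomial (Fin n) ℂ) :=
  LinearMap.mulLeft ℂ (X i)

/-- The power differential operator `p_{k,l} = ∑_{i=1}^n x_i^k ∂_i^l`. -/
noncomputable def powerDiffOp (n : ℕ) (k l : ℕ) : Module.End ℂ (MvPolynomial (Fin n) ℂ) :=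
  ∑ i : Fin n, (mulX n i) ^ k * (pd n i) ^ l

/-! The Weyl relation `∂x = x∂ + 1` gives `ad_∂ (x^c) = c x^(c-1)`, hence
`ad_∂^j (x^c) = c(c-1)⋯(c-j+1) x^(c-j)`. Since left multiplication by `∂` is the sum of the
commuting operators `ad_∂` and right multiplication by `∂`, the binomial theorem yields the
normal ordering `∂^b x^c = ∑_j C(b,j) c(c-1)⋯(c-j+1) x^(c-j) ∂^(b-j)`. Hence
`x^a ∂^b · x^c ∂^e` is a combination of the `x^(a+c-j) ∂^(b+e-j)`, whose exponent difference
is `(b-a) + (e-c)`, with coefficients independent of the variable. Operators in distinct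
variables commute, so the bracket of two power sums is the sum of the one-variable brackets. -/

open Finset

section WeylRelation

variable {A : Type*} [Ring A] {x d : A}

theorem mul_pow_eq_of_weyl (hdx : d * x = x * d + 1) (c : ℕ) :
    d * x ^ c = x ^ c * d + c • x ^ (c - 1) := by
  induction c with
  | zero => simp
  | succ c ih =>
    rw [pow_succ, ← mul_assoc, ih, add_mul, mul_assoc, hdx]
    cases c with
    | zero => simp
    | succ c =>
      rw [add_tsub_cancel_right, smul_mul_assoc, ← pow_succ, mul_add, mul_one, ← mul_assoc,
        ← pow_succ, add_assoc, ← succ_nsmul', add_tsub_cancel_right]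

theorem ad_pow_pow_of_weyl (hdx : d * x = x * d + 1) (c j : ℕ) :
    ((LinearMap.mulLeft ℤ d - LinearMap.mulRight ℤ d) ^ j) (x ^ c) =
      c.descFactorial j • x ^ (c - j) := by
  induction j with
  | zero => simp
  | succ j ih =>
    rw [pow_succ', Module.End.mul_apply, ih, map_nsmul, LinearMap.sub_apply,
      LinearMap.mulLeft_apply, LinearMap.mulRight_apply, mul_pow_eq_of_weyl hdx,
      add_sub_cancel_left, smul_smul, Nat.descFactorial_succ, mul_comm, Nat.sub_sub]

theorem pow_mul_pow_of_weyl (hdx : d * x = x * d + 1) (b c : ℕ) :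
    d ^ b * x ^ c = ∑ j ∈ range (min b c + 1),
      (b.choose j * c.descFactorial j) • (x ^ (c - j) * d ^ (b - j)) := by
  have hcomm : Commute (LinearMap.mulLeft ℤ d - LinearMap.mulRight ℤ d) (LinearMap.mulRight ℤ d) :=
    (LinearMap.commute_mulLeft_right d d).sub_left (Commute.refl _)
  have hleft : LinearMap.mulLeft ℤ d =
      (LinearMap.mulLeft ℤ d - LinearMap.mulRight ℤ d) + LinearMap.mulRight ℤ d := by simp
  calc d ^ b * x ^ c = (LinearMap.mulLeft ℤ d ^ b) (x ^ c) := by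
        rw [LinearMap.pow_mulLeft, LinearMap.mulLeft_apply]
    _ = ∑ j ∈ range (b + 1), (b.choose j * c.descFactorial j) • (x ^ (c - j) * d ^ (b - j)) := by
        conv_lhs => rw [hleft, hcomm.add_pow]
        rw [LinearMap.sum_apply]
        refine sum_congr rfl fun j _ => ?_
        rw [(hcomm.pow_pow j (b - j)).eq, Module.End.mul_apply, Module.End.natCast_apply,
          Module.End.mul_apply, map_nsmul, map_nsmul, ad_pow_pow_of_weyl hdx,
          LinearMap.pow_mulRight, LinearMap.mulRight_apply, smul_mul_assoc, smul_smul, mul_comm]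
    _ = _ := by
        refine (sum_subset (range_subset_range.2 (by omega)) fun j hjb hjbc => ?_).symm
        have hcj : c < j := by simp only [mem_range] at hjb hjbc; omega
        rw [(Nat.descFactorial_eq_zero_iff_lt).2 hcj, mul_zero, zero_smul]

theorem mul_pow_mul_pow_of_weyl (hdx : d * x = x * d + 1) (a b c e : ℕ) :
    (x ^ a * d ^ b) * (x ^ c * d ^ e) = ∑ j ∈ range (min b c + 1),
      (b.choose j * c.descFactorial j) • (x ^ (a + c - j) * d ^ (b + e - j)) := by
  rw [mul_assoc, ← mul_assoc (d ^ b), pow_mul_pow_of_weyl hdx, sum_mul, mul_sum]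
  refine sum_congr rfl fun j hj => ?_
  have hjc : j ≤ c := by simp only [mem_range] at hj; omega
  have hjb : j ≤ b := by simp only [mem_range] at hj; omega
  rw [Nat.add_sub_assoc hjc, Nat.sub_add_comm hjb, pow_add, pow_add, smul_mul_assoc, mul_smul_comm]
  simp only [mul_assoc]

end WeylRelation

theorem sum_mul_sum_sub_sum_mul_sum_of_commute {A ι : Type*} [Ring A] (s : Finset ι) (f g : ι → A)
    (h : ∀ i j, i ≠ j → Commute (f i) (g j)) :
    (∑ i ∈ s, f i) * (∑ j ∈ s, g j) - (∑ j ∈ s, g j) * (∑ i ∈ s, f i) =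
      ∑ i ∈ s, (f i * g i - g i * f i) := by
  rw [sum_mul_sum, sum_mul_sum, sum_comm (s := s) (t := s) (f := fun j i => g j * f i),
    ← sum_sub_distrib]
  refine sum_congr rfl fun i hi => ?_
  rw [← sum_sub_distrib]
  exact sum_eq_single_of_mem i hi fun j _ hji => sub_eq_zero.2 (h i j hji.symm).eq

section WeylAlgebra

variable {n : ℕ}

theorem pd_mul_mulX_self (i : Fin n) : pd n i * mulX n i = mulX n i * pd n i + 1 := by
  refine LinearMap.ext fun p => ?_
  simp [pd, mulX]

theorem commute_pd_mulX {i j : Fin n} (hij : i ≠ j) : Commute (pd n i) (mulX n j) := by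
  refine LinearMap.ext fun p => ?_
  simp [pd, mulX, pderiv_X_of_ne hij.symm]

theorem commute_mulX (i j : Fin n) : Commute (mulX n i) (mulX n j) := by
  refine LinearMap.ext fun p => ?_
  simp [mulX, mul_left_comm]

theorem commute_pd (i j : Fin n) : Commute (pd n i) (pd n j) := by
  have : ⁅pderiv i, pderiv j⁆ = (0 : Derivation ℂ (MvPolynomial (Fin n) ℂ) _) :=
    derivation_ext fun k => by
      rw [Derivation.commutator_apply, pderiv_X, pderiv_X]
      simp [Pi.single_apply, apply_ite]
  rw [commute_iff_lie_eq, pd, pd, ← Derivation.commutator_coe_linear_map, this]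
  rfl

theorem commute_mulX_pow_mul_pd_pow {i j : Fin n} (hij : i ≠ j) (a b c e : ℕ) :
    Commute (mulX n i ^ a * pd n i ^ b) (mulX n j ^ c * pd n j ^ e) :=
  .mul_left
    (.mul_right ((commute_mulX i j).pow_pow a c) ((commute_pd_mulX hij.symm).symm.pow_pow a e))
    (.mul_right ((commute_pd_mulX hij).pow_pow b c) ((commute_pd i j).pow_pow b e))

theorem lie_powerDiffOp (k₁ l₁ k₂ l₂ : ℕ) :
    ⁅powerDiffOp n k₁ l₁, powerDiffOp n k₂ l₂⁆ =
      ∑ i, (mulX n i ^ k₁ * pd n i ^ l₁) * (mulX n i ^ k₂ * pd n i ^ l₂) -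
        ∑ i, (mulX n i ^ k₂ * pd n i ^ l₂) * (mulX n i ^ k₁ * pd n i ^ l₁) := by
  rw [Ring.lie_def, powerDiffOp, powerDiffOp, sum_mul_sum_sub_sum_mul_sum_of_commute _ _ _
    fun i j hij => commute_mulX_pow_mul_pd_pow hij _ _ _ _, sum_sub_distrib]

end WeylAlgebra

noncomputable def powerDiffSpan (n m : ℕ) : Submodule ℂ (Module.End ℂ (MvPolynomial (Fin n) ℂ)) :=
  Submodule.span ℂ {A | ∃ k l : ℕ, (m : ℤ) ∣ (l : ℤ) - (k : ℤ) ∧ A = powerDiffOp n k l}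

theorem powerDiffOp_mem_powerDiffSpan {n m k l : ℕ} (h : (m : ℤ) ∣ (l : ℤ) - (k : ℤ)) :
    powerDiffOp n k l ∈ powerDiffSpan n m :=
  Submodule.subset_span ⟨k, l, h, rfl⟩

theorem sum_mulX_pow_mul_pd_pow_mul_mem_powerDiffSpan {n m k₁ l₁ k₂ l₂ : ℕ}
    (h₁ : (m : ℤ) ∣ (l₁ : ℤ) - (k₁ : ℤ)) (h₂ : (m : ℤ) ∣ (l₂ : ℤ) - (k₂ : ℤ)) :
    ∑ i, (mulX n i ^ k₁ * pd n i ^ l₁) * (mulX n i ^ k₂ * pd n i ^ l₂) ∈ powerDiffSpan n m := by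
  simp only [mul_pow_mul_pow_of_weyl (pd_mul_mulX_self _)]
  rw [sum_comm]
  refine sum_mem fun j hj => ?_
  have hj : j ≤ l₁ ∧ j ≤ k₂ := by simp only [mem_range] at hj; omega
  have hdiff : ((l₁ + l₂ - j : ℕ) : ℤ) - ((k₁ + k₂ - j : ℕ) : ℤ) = (l₁ - k₁) + (l₂ - k₂) := by
    omega
  rw [← smul_sum]
  exact nsmul_mem (powerDiffOp_mem_powerDiffSpan (hdiff ▸ dvd_add h₁ h₂)) _

theorem stmt13_general (n m : ℕ) (k₁ l₁ k₂ l₂ : ℕ)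
    (h₁ : (m : ℤ) ∣ (l₁ : ℤ) - (k₁ : ℤ)) (h₂ : (m : ℤ) ∣ (l₂ : ℤ) - (k₂ : ℤ)) :
    ⁅powerDiffOp n k₁ l₁, powerDiffOp n k₂ l₂⁆ ∈
      Submodule.span ℂ {A : Module.End ℂ (MvPolynomial (Fin n) ℂ) |
        ∃ k l : ℕ, (m : ℤ) ∣ (l : ℤ) - (k : ℤ) ∧ A = powerDiffOp n k l} := by
  rw [lie_powerDiffOp]
  exact sub_mem (sum_mulX_pow_mul_pd_pow_mul_mem_powerDiffSpan h₁ h₂)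
    (sum_mulX_pow_mul_pd_pow_mul_mem_powerDiffSpan h₂ h₁)

/-- For fixed `m ≥ 1`, the span of the power differential operators `p_{k,l}` with
`m ∣ l - k` is closed under the commutator bracket. -/
theorem stmt13 (n m : ℕ) (hm : 1 ≤ m) (k₁ l₁ k₂ l₂ : ℕ)
    (h₁ : (m : ℤ) ∣ (l₁ : ℤ) - (k₁ : ℤ)) (h₂ : (m : ℤ) ∣ (l₂ : ℤ) - (k₂ : ℤ)) :
    ⁅powerDiffOp n k₁ l₁, powerDiffOp n k₂ l₂⁆ ∈
      Submodule.span ℂ {A : Module.End ℂ (MvPolynomial (Fin n) ℂ) |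
        ∃ k l : ℕ, (m : ℤ) ∣ (l : ℤ) - (k : ℤ) ∧ A = powerDiffOp n k l} :=
  stmt13_general n m k₁ l₁ k₂ l₂ h₁ h₂
end

section
/- In the one-variable Weyl algebra, the Lie algebra generated by the set {x^k, ∂^l : 0 ≤ k ≤ 3, 0 ≤ l ≤ 3} under the commutator bracket is the whole Weyl algebra, i.e., every normally ordered monomial x^k ∂^l lies in this Lie algebra. -/
open Polynomial

attribute [local instance 100] LieRing.ofAssociativeRing

/-- Multiplication by `x` as an endomorphism of `ℂ[x]`. -/
noncomputable def weylX : Module.End ℂ (Polynomial ℂ) :=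
  LinearMap.mulLeft ℂ (Polynomial.X : Polynomial ℂ)

/-- Differentiation as an endomorphism of `ℂ[x]`. -/
noncomputable def weylD : Module.End ℂ (Polynomial ℂ) :=
  Polynomial.derivative

/-!
Only the relation `∂x = x∂ + 1` is used, so the argument applies to any pair `X, D` with
`DX = XD + 1` in an algebra over a field of characteristic zero. The brackets `[∂², x³] = 6x²∂ + 6x` and
`[∂³, x²] = 6x∂² + 6∂` put `E = x²∂` and `F = x∂²` into the Lie algebra, and `1 = [∂, x]` is there
too. Up to a multiple of a monomial of lower degree,
`[E, x^k ∂^l] = (k - 2l) x^(k+1) ∂^l` and `[F, x^k ∂^l] = (2k - l) x^k ∂^(l+1)`;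
every monomial of degree `n + 1` is reached from degree `n` by one of the two with a nonzero
coefficient, which gives an induction on the total degree. The anti-automorphism `x ↔ ∂`
turns each identity for `E` into the corresponding one for `F`.
-/

theorem Ring.lie_mul {A : Type*} [Ring A] (a b c : A) :
    ⁅a, b * c⁆ = ⁅a, b⁆ * c + b * ⁅a, c⁆ := by
  simp only [Ring.lie_def]
  noncomm_ring

theorem LieSubalgebra.mem_of_lie_eq_zsmul_add {K L : Type*} [Field K] [CharZero K] [LieRing L]
    [LieAlgebra K L] (S : LieSubalgebra K L) {e a b c : L} {r : ℤ} (hr : r ≠ 0) (he : e ∈ S)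
    (ha : a ∈ S) (hc : c ∈ S) (h : ⁅e, a⁆ = r • b + c) : b ∈ S := by
  have hrb : (r : K) • b ∈ S := by
    rw [Int.cast_smul_eq_zsmul, eq_sub_of_add_eq h.symm]
    exact sub_mem (S.lie_mem he ha) hc
  simpa [smul_smul, hr] using S.smul_mem (r : K)⁻¹ hrb

structure IsWeylPair {A : Type*} [Ring A] (X D : A) : Prop where
  mul_eq : D * X = X * D + 1

theorem isWeylPair_weylX_weylD : IsWeylPair weylX weylD :=
  ⟨LinearMap.ext fun p => by simp [weylD, weylX, derivative_mul, mul_comm]⟩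

namespace IsWeylPair

open MulOpposite

section Identities

variable {A : Type*} [Ring A] {X D : A}

theorem op (h : IsWeylPair X D) : IsWeylPair (op D) (op X) :=
  ⟨by rw [← op_mul, ← op_mul, h.mul_eq, op_add, op_mul, op_one]⟩

theorem D_mul_X_pow_succ (h : IsWeylPair X D) (k : ℕ) :
    D * X ^ (k + 1) = X ^ (k + 1) * D + ((k : ℤ) + 1) • X ^ k := by
  induction k with
  | zero => simpa using h.mul_eq
  | succ k ih =>
    rw [pow_succ X (k + 1), ← mul_assoc, ih, add_mul, mul_assoc, h.mul_eq, smul_mul_assoc,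
      ← pow_succ, mul_add, mul_one, ← mul_assoc, ← pow_succ]
    push_cast
    module

theorem D_pow_succ_mul_X (h : IsWeylPair X D) (l : ℕ) :
    D ^ (l + 1) * X = X * D ^ (l + 1) + ((l : ℤ) + 1) • D ^ l := by
  simpa [← op_pow, ← op_mul, ← op_add, ← op_smul] using h.op.D_mul_X_pow_succ l

theorem D_pow_succ_mul_X_mul (h : IsWeylPair X D) (l : ℕ) (r : A) :
    D ^ (l + 1) * (X * r) = X * (D ^ (l + 1) * r) + ((l : ℤ) + 1) • (D ^ l * r) := by
  rw [← mul_assoc, h.D_pow_succ_mul_X, add_mul, mul_assoc, smul_mul_assoc]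

theorem X_mul_lie_D_X_pow (h : IsWeylPair X D) (k : ℕ) : X * ⁅D, X ^ k⁆ = (k : ℤ) • X ^ k := by
  rcases k with _ | k
  · simp [Ring.lie_def]
  · rw [Ring.lie_def, h.D_mul_X_pow_succ, add_sub_cancel_left, mul_smul_comm, ← pow_succ']
    push_cast
    rfl

theorem lie_D_pow_X_mul_D (h : IsWeylPair X D) (l : ℕ) : ⁅D ^ l, X⁆ * D = (l : ℤ) • D ^ l := by
  simpa [Ring.lie_def, ← op_pow, ← op_mul, ← op_sub, ← op_smul] using
    congrArg unop (h.op.X_mul_lie_D_X_pow l)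

theorem lie_X_sq_D_X_pow (h : IsWeylPair X D) (k : ℕ) :
    ⁅X ^ 2 * D, X ^ k⁆ = (k : ℤ) • X ^ (k + 1) := by
  calc ⁅X ^ 2 * D, X ^ k⁆ = X * (X * ⁅D, X ^ k⁆) := by
        rw [Ring.lie_def, Ring.lie_def, ← mul_assoc, ← (Commute.pow_pow_self X 2 k).eq]
        noncomm_ring
    _ = (k : ℤ) • X ^ (k + 1) := by rw [h.X_mul_lie_D_X_pow, mul_smul_comm, ← pow_succ']

theorem lie_X_sq_D_D_pow_succ (h : IsWeylPair X D) (l : ℕ) :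
    ⁅X ^ 2 * D, D ^ (l + 1)⁆ =
      -((2 * ((l : ℤ) + 1)) • (X * D ^ (l + 1)) + (((l : ℤ) + 1) * l) • D ^ l) := by
  have hDXD : D ^ l * (X * D) = X * D ^ (l + 1) + (l : ℤ) • D ^ l := by
    rw [← h.lie_D_pow_X_mul_D, Ring.lie_def, pow_succ]
    noncomm_ring
  calc ⁅X ^ 2 * D, D ^ (l + 1)⁆ = X * (X * (D ^ (l + 1) * D)) - D ^ (l + 1) * (X * (X * D)) := by
        rw [Ring.lie_def, mul_assoc, ← pow_mul_comm', pow_two]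
        simp only [mul_assoc]
    _ = _ := by
        simp only [h.D_pow_succ_mul_X_mul, hDXD, mul_add, mul_smul_comm, ← pow_succ]
        module

theorem lie_X_sq_D_X_pow_mul_D_pow_succ (h : IsWeylPair X D) (k l : ℕ) :
    ⁅X ^ 2 * D, X ^ k * D ^ (l + 1)⁆ = ((k : ℤ) - 2 * (l + 1)) • (X ^ (k + 1) * D ^ (l + 1)) -
      (((l : ℤ) + 1) * l) • (X ^ k * D ^ l) := by
  rw [Ring.lie_mul, h.lie_X_sq_D_X_pow, h.lie_X_sq_D_D_pow_succ]
  simp only [smul_mul_assoc, mul_neg, mul_add, mul_smul_comm, ← mul_assoc, ← pow_succ]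
  module

theorem lie_X_D_sq_D_pow (h : IsWeylPair X D) (l : ℕ) :
    ⁅X * D ^ 2, D ^ l⁆ = -((l : ℤ) • D ^ (l + 1)) := by
  have := congrArg unop (h.op.lie_X_sq_D_X_pow l)
  simp only [Ring.lie_def, unop_sub, unop_mul, unop_pow, unop_op, unop_smul] at this
  rw [Ring.lie_def, ← neg_sub, this]

theorem lie_X_D_sq_X_pow_succ_mul_D_pow (h : IsWeylPair X D) (k l : ℕ) :
    ⁅X * D ^ 2, X ^ (k + 1) * D ^ l⁆ = (2 * ((k : ℤ) + 1) - l) • (X ^ (k + 1) * D ^ (l + 1)) +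
      (((k : ℤ) + 1) * k) • (X ^ k * D ^ l) := by
  have := congrArg unop (h.op.lie_X_sq_D_X_pow_mul_D_pow_succ l k)
  simp only [Ring.lie_def, unop_sub, unop_mul, unop_pow, unop_op, unop_smul] at this
  rw [Ring.lie_def, ← neg_sub, this]
  module

theorem lie_D_sq_X_cube (h : IsWeylPair X D) :
    ⁅D ^ 2, X ^ 3⁆ = (6 : ℤ) • (X ^ 2 * D) + (6 : ℤ) • X := by
  have h₃ : D * X ^ 3 = X ^ 3 * D + (3 : ℤ) • X ^ 2 := by simpa using h.D_mul_X_pow_succ 2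
  have h₂ : D * X ^ 2 = X ^ 2 * D + (2 : ℤ) • X := by simpa using h.D_mul_X_pow_succ 1
  rw [Ring.lie_def, pow_two D, mul_assoc, h₃, mul_add, ← mul_assoc, h₃, mul_smul_comm, h₂]
  simp only [add_mul, smul_mul_assoc, mul_assoc, ← pow_two]
  module

theorem lie_D_cube_X_sq (h : IsWeylPair X D) :
    ⁅D ^ 3, X ^ 2⁆ = (6 : ℤ) • (X * D ^ 2) + (6 : ℤ) • D := by
  have := congrArg unop h.op.lie_D_sq_X_cube
  simp only [Ring.lie_def, unop_sub, unop_mul, unop_pow, unop_op, unop_smul, unop_add] at this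
  rwa [Ring.lie_def]

end Identities

section LieSubalgebra

variable {K : Type*} {A : Type*} [Field K] [CharZero K] [Ring A] [Algebra K A] {X D : A}

theorem X_pow_mul_D_pow_mem {L : LieSubalgebra K A} (h : IsWeylPair X D) (hX : X ∈ L)
    (hD : D ∈ L) (hE : X ^ 2 * D ∈ L) (hF : X * D ^ 2 ∈ L) (k l : ℕ) : X ^ k * D ^ l ∈ L := by
  suffices ∀ n k l, k + l ≤ n → X ^ k * D ^ l ∈ L from this _ k l le_rfl
  intro n
  induction n with
  | zero =>
    intro k l hkl
    obtain ⟨rfl, rfl⟩ : k = 0 ∧ l = 0 := by omega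
    simpa [Ring.lie_def, h.mul_eq] using L.lie_mem hD hX
  | succ n ih =>
    intro k l hkl
    rcases k with _ | k <;> rcases l with _ | l
    · exact ih 0 0 (by omega)
    · rw [pow_zero, one_mul]
      rcases eq_or_ne l 0 with rfl | hl
      · simpa using hD
      exact L.mem_of_lie_eq_zsmul_add (r := -l) (by omega) hF (by simpa using ih 0 l (by omega))
        L.zero_mem (by rw [h.lie_X_D_sq_D_pow, neg_smul, add_zero])
    · rw [pow_zero, mul_one]
      rcases eq_or_ne k 0 with rfl | hk
      · simpa using hX
      exact L.mem_of_lie_eq_zsmul_add (r := k) (by omega) hE (by simpa using ih k 0 (by omega))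
        L.zero_mem (by rw [h.lie_X_sq_D_X_pow, add_zero])
    · rcases ne_or_eq k (2 * (l + 1)) with hk | rfl
      · exact L.mem_of_lie_eq_zsmul_add (by omega) hE (ih k (l + 1) (by omega))
          (neg_mem (zsmul_mem (ih k l (by omega)) _))
          ((h.lie_X_sq_D_X_pow_mul_D_pow_succ k l).trans (sub_eq_add_neg _ _))
      · exact L.mem_of_lie_eq_zsmul_add (by push_cast; omega) hF
          (ih (2 * (l + 1) + 1) l (by omega)) (zsmul_mem (ih (2 * (l + 1)) l (by omega)) _)
          (h.lie_X_D_sq_X_pow_succ_mul_D_pow _ l)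

variable (K) in
theorem X_pow_mul_D_pow_mem_lieSpan (h : IsWeylPair X D) (k l : ℕ) :
    X ^ k * D ^ l ∈
      LieSubalgebra.lieSpan K A ({a | ∃ i ≤ 3, a = X ^ i} ∪ {a | ∃ j ≤ 3, a = D ^ j}) := by
  set L := LieSubalgebra.lieSpan K A ({a | ∃ i ≤ 3, a = X ^ i} ∪ {a | ∃ j ≤ 3, a = D ^ j})
  have hX (i : ℕ) (hi : i ≤ 3) : X ^ i ∈ L := LieSubalgebra.subset_lieSpan (Or.inl ⟨i, hi, rfl⟩)
  have hD (j : ℕ) (hj : j ≤ 3) : D ^ j ∈ L := LieSubalgebra.subset_lieSpan (Or.inr ⟨j, hj, rfl⟩)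
  have hX₁ : X ∈ L := by simpa using hX 1 (by norm_num)
  have hD₁ : D ∈ L := by simpa using hD 1 (by norm_num)
  refine h.X_pow_mul_D_pow_mem hX₁ hD₁ ?_ ?_ k l
  · exact L.mem_of_lie_eq_zsmul_add (by norm_num) (hD 2 (by norm_num)) (hX 3 (by norm_num))
      (zsmul_mem hX₁ 6) h.lie_D_sq_X_cube
  · exact L.mem_of_lie_eq_zsmul_add (by norm_num) (hD 3 (by norm_num)) (hX 2 (by norm_num))
      (zsmul_mem hD₁ 6) h.lie_D_cube_X_sq

end LieSubalgebra

end IsWeylPair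

/-- The Lie algebra generated by `{x^k, ∂^l : 0 ≤ k,l ≤ 3}` inside the Weyl algebra
contains every normally ordered monomial `x^k ∂^l`, i.e. it is the whole Weyl algebra. -/
theorem stmt14 (k l : ℕ) :
    weylX ^ k * weylD ^ l ∈
      LieSubalgebra.lieSpan ℂ (Module.End ℂ (Polynomial ℂ))
        ({A | ∃ i ≤ 3, A = weylX ^ i} ∪ {A | ∃ j ≤ 3, A = weylD ^ j}) :=
  isWeylPair_weylX_weylD.X_pow_mul_D_pow_mem_lieSpan ℂ k l
end

section
/- For n = 3 and the natural permutation action of S₃ on ℂ[x₁,x₂,x₃], the space B^{ann} = {f : (∑_i x_i^k ∂_i^l) f = 0 for all 0 ≤ k < l ≤ 2} equals the 4-dimensional space ℂ·1 ⊕ ℂ(x₁−x₃) ⊕ ℂ(x₂−x₃) ⊕ ℂ(x₁−x₂)(x₁−x₃)(x₂−x₃). -/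
open MvPolynomial

/-- The partial derivative `∂_i` as an endomorphism of `ℂ[x₁,x₂,x₃]`. -/
noncomputable def pd3 (i : Fin 3) : Module.End ℂ (MvPolynomial (Fin 3) ℂ) :=
  (MvPolynomial.pderiv i).toLinearMap

/-- The power differential operator `p_{k,l} = ∑_{i=1}^3 x_i^k ∂_i^l` on `ℂ[x₁,x₂,x₃]`. -/
noncomputable def p3 (k l : ℕ) : Module.End ℂ (MvPolynomial (Fin 3) ℂ) :=
  ∑ i : Fin 3, (LinearMap.mulLeft ℂ (X i)) ^ k * (pd3 i) ^ l

/-!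
Since `p_{0,1} = ∂₁ + ∂₂ + ∂₃`, a polynomial `f` in its kernel is invariant under translation
along `(1,1,1)`, so it is determined by the coefficients `g(a,b)` of its monomials `x₁ᵃ x₂ᵇ`
free of `x₃`. On this slice `p_{1,2} f = 0` reads `a(a+1) g(a+1,b) + b(b+1) g(a,b+1) = 0`, and
`p_{0,2} f = 0`, after eliminating `∂₃ = -∂₁ - ∂₂`, is the recurrence of `∂₁² + ∂₁∂₂ + ∂₂²`.
The first recurrence at `a = 0` kills `g(0,b)` for `b ≥ 2`; comparing the two at `(1,b-1)` and
`(0,b-1)` then kills `g(1,b)` unless `b = 0, 2`, and the first one propagates this to `g(a,b)`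
for all `a ≥ 1`. So `g` is determined by `g(0,0), g(1,0), g(0,1), g(2,1)`, the common kernel has
dimension at most `4`, and the four given polynomials are linearly independent elements of it.
-/

namespace MvPolynomial

variable {σ R : Type*} [CommSemiring R]

theorem coeff_X_mul_pderiv (i : σ) (g : MvPolynomial σ R) (m : σ →₀ ℕ) :
    coeff m (X i * pderiv i g) = coeff m g * m i := by
  classical
  by_cases hm : m i = 0
  · rw [coeff_X_mul', if_neg (by simpa using hm), hm, Nat.cast_zero, mul_zero]
  · obtain ⟨m', rfl⟩ : ∃ m', m = Finsupp.single i 1 + m' :=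
      ⟨m - Finsupp.single i 1, (add_tsub_cancel_of_le (Finsupp.single_le_iff.2 (by omega))).symm⟩
    rw [coeff_X_mul, coeff_pderiv, add_comm m']
    simp [add_comm]

theorem eq_zero_of_sum_pderiv_eq_zero [Fintype σ] [NoZeroDivisors R] [CharZero R]
    {f : MvPolynomial σ R} (hf : ∑ i, pderiv i f = 0) (j : σ)
    (h0 : ∀ m : σ →₀ ℕ, m j = 0 → coeff m f = 0) : f = 0 := by
  classical
  suffices ∀ r (m : σ →₀ ℕ), m j = r → coeff m f = 0 from
    eq_zero_iff.2 fun m ↦ this _ m rfl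
  intro r
  induction r with
  | zero => exact h0
  | succ r ih =>
    intro m hm
    obtain ⟨m', rfl⟩ : ∃ m', m = m' + Finsupp.single j 1 :=
      ⟨m - Finsupp.single j 1, (tsub_add_cancel_of_le (Finsupp.single_le_iff.2 (by omega))).symm⟩
    have hm' : m' j = r := by simpa using hm
    have h := congrArg (coeff m') hf
    rw [coeff_sum, Finset.sum_eq_single j, coeff_pderiv, coeff_zero, hm'] at h
    · exact (mul_eq_zero.1 h).resolve_right (Nat.cast_add_one_ne_zero r)
    · intro i _ hij
      rw [coeff_pderiv, ih _ (by simp [hij, hm']), zero_mul]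
    · simp

end MvPolynomial

theorem eq_zero_of_recurrences {K : Type*} [Field K] [CharZero K] {g : ℕ → ℕ → K}
    (hE : ∀ a b : ℕ, g (a + 1) b * (a * (a + 1)) + g a (b + 1) * (b * (b + 1)) = 0)
    (hL : ∀ a b : ℕ, g (a + 2) b * ((a + 1) * (a + 2)) + g (a + 1) (b + 1) * ((a + 1) * (b + 1))
      + g a (b + 2) * ((b + 1) * (b + 2)) = 0)
    (h00 : g 0 0 = 0) (h10 : g 1 0 = 0) (h01 : g 0 1 = 0) (h21 : g 2 1 = 0) (a b : ℕ) :
    g a b = 0 := by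
  have g0 : ∀ b, g 0 b = 0
    | 0 => h00
    | 1 => h01
    | b + 2 => by
      refine (mul_eq_zero.1 ?_).resolve_right (?_ : ((b : K) + 1) * (b + 2) ≠ 0)
      · linear_combination (norm := (push_cast; ring)) hE 0 (b + 1)
      · exact_mod_cast (by positivity : (b + 1) * (b + 2) ≠ 0)
  have g1 : ∀ b, g 1 b = 0
    | 0 => h10
    | 1 => by linear_combination (norm := (push_cast; ring)) hL 0 0 - hE 1 0 - 2 * g0 2
    | 2 => by linear_combination (norm := (push_cast; ring)) (hE 1 1 - 2 * h21) / 2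
    | k + 3 => by
      refine (mul_eq_zero.1 ?_).resolve_right (?_ : ((k : K) + 3) * (k + 1) ≠ 0)
      · linear_combination (norm := (push_cast; ring))
          hE 1 (k + 2) - hL 0 (k + 2) + ((k : K) + 3) * (k + 4) * g0 (k + 4)
      · exact_mod_cast (by positivity : (k + 3) * (k + 1) ≠ 0)
  have g_succ : ∀ a b, g (a + 1) b = 0 := by
    intro a
    induction a with
    | zero => exact g1
    | succ a ih =>
      intro b
      refine (mul_eq_zero.1 ?_).resolve_right (?_ : ((a : K) + 1) * (a + 2) ≠ 0)
      · linear_combination (norm := (push_cast; ring))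
          hE (a + 1) b - ((b : K) * (b + 1)) * ih (b + 1)
      · exact_mod_cast (by positivity : (a + 1) * (a + 2) ≠ 0)
  cases a with
  | zero => exact g0 b
  | succ a => exact g_succ a b

noncomputable def expVec (a b c : ℕ) : Fin 3 →₀ ℕ :=
  Finsupp.single 0 a + Finsupp.single 1 b + Finsupp.single 2 c

section expVec

variable (a b c : ℕ)

@[simp] lemma expVec_apply_zero : expVec a b c 0 = a := by simp [expVec]
@[simp] lemma expVec_apply_one : expVec a b c 1 = b := by simp [expVec]
@[simp] lemma expVec_apply_two : expVec a b c 2 = c := by simp [expVec]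

lemma expVec_eta (m : Fin 3 →₀ ℕ) : expVec (m 0) (m 1) (m 2) = m := by
  ext i; fin_cases i <;> simp

@[simp] lemma expVec_add_single_zero (n : ℕ) :
    expVec a b c + Finsupp.single 0 n = expVec (a + n) b c := by
  ext i; fin_cases i <;> simp

@[simp] lemma expVec_add_single_one (n : ℕ) :
    expVec a b c + Finsupp.single 1 n = expVec a (b + n) c := by
  ext i; fin_cases i <;> simp

@[simp] lemma expVec_add_single_two (n : ℕ) :
    expVec a b c + Finsupp.single 2 n = expVec a b (c + n) := by
  ext i; fin_cases i <;> simp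

end expVec

section coefficients

variable (f : MvPolynomial (Fin 3) ℂ)

lemma p3_zero_one_apply : p3 0 1 f = ∑ i, pderiv i f := by
  simp [p3, pd3]

lemma p3_zero_two_apply : p3 0 2 f = ∑ i, pderiv i (pderiv i f) := by
  simp [p3, pd3, pow_two]

lemma p3_one_two_apply : p3 1 2 f = ∑ i, X i * pderiv i (pderiv i f) := by
  simp [p3, pd3, pow_two]

lemma coeff_p3_zero_one (a b c : ℕ) :
    coeff (expVec a b c) (p3 0 1 f) =
      coeff (expVec (a + 1) b c) f * (a + 1) + coeff (expVec a (b + 1) c) f * (b + 1) +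
        coeff (expVec a b (c + 1)) f * (c + 1) := by
  simp [p3_zero_one_apply, Fin.sum_univ_three, coeff_pderiv]

lemma coeff_p3_zero_two (a b c : ℕ) :
    coeff (expVec a b c) (p3 0 2 f) =
      coeff (expVec (a + 2) b c) f * ((a + 1) * (a + 2)) +
        coeff (expVec a (b + 2) c) f * ((b + 1) * (b + 2)) +
        coeff (expVec a b (c + 2)) f * ((c + 1) * (c + 2)) := by
  simp only [p3_zero_two_apply, Fin.sum_univ_three, coeff_add, coeff_pderiv,
    expVec_add_single_zero, expVec_add_single_one, expVec_add_single_two,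
    expVec_apply_zero, expVec_apply_one, expVec_apply_two]
  push_cast
  ring

lemma coeff_p3_one_two (a b c : ℕ) :
    coeff (expVec a b c) (p3 1 2 f) =
      coeff (expVec (a + 1) b c) f * (a * (a + 1)) +
        coeff (expVec a (b + 1) c) f * (b * (b + 1)) +
        coeff (expVec a b (c + 1)) f * (c * (c + 1)) := by
  simp only [p3_one_two_apply, Fin.sum_univ_three, coeff_add, coeff_X_mul_pderiv, coeff_pderiv,
    expVec_add_single_zero, expVec_add_single_one, expVec_add_single_two,
    expVec_apply_zero, expVec_apply_one, expVec_apply_two]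
  ring

lemma slice_relation_p3_one_two (hE : p3 1 2 f = 0) (a b : ℕ) :
    coeff (expVec (a + 1) b 0) f * (a * (a + 1)) +
      coeff (expVec a (b + 1) 0) f * (b * (b + 1)) = 0 := by
  simpa [hE] using (coeff_p3_one_two f a b 0).symm

lemma slice_relation_p3_zero_two (hD : p3 0 1 f = 0) (hΔ : p3 0 2 f = 0) (a b : ℕ) :
    coeff (expVec (a + 2) b 0) f * ((a + 1) * (a + 2)) +
      coeff (expVec (a + 1) (b + 1) 0) f * ((a + 1) * (b + 1)) +
      coeff (expVec a (b + 2) 0) f * ((b + 1) * (b + 2)) = 0 := by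
  have hΔ₀ := coeff_p3_zero_two f a b 0
  have hD₁ := coeff_p3_zero_one f a b 1
  have hDa := coeff_p3_zero_one f (a + 1) b 0
  have hDb := coeff_p3_zero_one f a (b + 1) 0
  simp only [hD, hΔ, coeff_zero] at hΔ₀ hD₁ hDa hDb
  linear_combination (norm := (push_cast; ring))
    (-hΔ₀ + hD₁ - ((a : ℂ) + 1) * hDa - ((b : ℂ) + 1) * hDb) / 2

theorem eq_zero_of_p3_eq_zero (hD : p3 0 1 f = 0) (hΔ : p3 0 2 f = 0) (hE : p3 1 2 f = 0)
    (h000 : coeff (expVec 0 0 0) f = 0) (h100 : coeff (expVec 1 0 0) f = 0)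
    (h010 : coeff (expVec 0 1 0) f = 0) (h210 : coeff (expVec 2 1 0) f = 0) : f = 0 := by
  refine eq_zero_of_sum_pderiv_eq_zero (p3_zero_one_apply f ▸ hD) 2 fun m hm ↦ ?_
  rw [← expVec_eta m, hm]
  exact eq_zero_of_recurrences (g := fun a b ↦ coeff (expVec a b 0) f)
    (slice_relation_p3_one_two f hE) (slice_relation_p3_zero_two f hD hΔ)
    h000 h100 h010 h210 _ _

end coefficients

noncomputable def annihilator : Submodule ℂ (MvPolynomial (Fin 3) ℂ) :=
  LinearMap.ker (p3 0 1) ⊓ LinearMap.ker (p3 0 2) ⊓ LinearMap.ker (p3 1 2)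

lemma mem_annihilator {f : MvPolynomial (Fin 3) ℂ} :
    f ∈ annihilator ↔ p3 0 1 f = 0 ∧ p3 0 2 f = 0 ∧ p3 1 2 f = 0 := by
  simp [annihilator, and_assoc]

noncomputable def annihilatorBasis : Fin 4 → MvPolynomial (Fin 3) ℂ :=
  ![1, X 0 - X 2, X 1 - X 2, (X 0 - X 1) * (X 0 - X 2) * (X 1 - X 2)]

lemma annihilatorBasis_mem (i : Fin 4) : annihilatorBasis i ∈ annihilator := by
  rw [mem_annihilator, p3_zero_one_apply, p3_zero_two_apply, p3_one_two_apply]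
  fin_cases i <;> refine ⟨?_, ?_, ?_⟩ <;>
    simp [annihilatorBasis, Fin.sum_univ_three, pderiv_X] <;> ring

lemma linearIndependent_annihilatorBasis : LinearIndependent ℂ annihilatorBasis := by
  rw [Fintype.linearIndependent_iff]
  intro c hc
  have hev (x : Fin 3 → ℂ) := congrArg (eval x) hc
  have e0 := hev ![0, 0, 0]
  have e1 := hev ![1, 0, 0]
  have e2 := hev ![0, 1, 0]
  have e3 := hev ![2, 1, 0]
  simp only [annihilatorBasis, Fin.sum_univ_four, Matrix.cons_val_zero, Matrix.cons_val_one,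
    Matrix.cons_val, map_add, map_sub, map_mul, map_one, map_zero, smul_eval, eval_X,
    mul_one, mul_zero, add_zero, sub_self, sub_zero, zero_sub] at e0 e1 e2 e3
  have c0 : c 0 = 0 := e0
  have c1 : c 1 = 0 := by linear_combination e1 - e0
  have c2 : c 2 = 0 := by linear_combination e2 - e0
  have c3 : c 3 = 0 := by linear_combination (e3 - 2 * e1 - e2 + 2 * e0) / 2
  intro i
  fin_cases i <;> assumption

noncomputable def sliceCoeffs : annihilator →ₗ[ℂ] Fin 4 → ℂ :=
  LinearMap.pi fun i ↦
    (lcoeff ℂ (![expVec 0 0 0, expVec 1 0 0, expVec 0 1 0, expVec 2 1 0] i)).comp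
      annihilator.subtype

lemma sliceCoeffs_injective : Function.Injective sliceCoeffs := by
  rw [injective_iff_map_eq_zero]
  rintro ⟨f, hf⟩ h0
  obtain ⟨hD, hΔ, hE⟩ := mem_annihilator.1 hf
  have h (i : Fin 4) := congrFun h0 i
  exact Subtype.ext (eq_zero_of_p3_eq_zero f hD hΔ hE (h 0) (h 1) (h 2) (h 3))

instance : FiniteDimensional ℂ annihilator := .of_injective _ sliceCoeffs_injective

lemma span_annihilatorBasis : Submodule.span ℂ (Set.range annihilatorBasis) = annihilator := by
  refine Submodule.eq_of_le_of_finrank_le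
    (Submodule.span_le.2 (Set.range_subset_iff.2 annihilatorBasis_mem)) ?_
  rw [finrank_span_eq_card linearIndependent_annihilatorBasis]
  simpa using LinearMap.finrank_le_finrank_of_injective sliceCoeffs_injective

/-- For `S₃` acting on `ℂ[x₁,x₂,x₃]`, the space `B^{ann}`, i.e. the common kernel of
`p_{0,1}, p_{0,2}, p_{1,2}`, is the 4-dimensional space spanned by
`1, x₁-x₃, x₂-x₃, (x₁-x₂)(x₁-x₃)(x₂-x₃)`, and these four polynomials are linearly
independent. -/
theorem stmt17 :
    (∀ f : MvPolynomial (Fin 3) ℂ,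
      (p3 0 1 f = 0 ∧ p3 0 2 f = 0 ∧ p3 1 2 f = 0) ↔
        ∃ a b c d : ℂ,
          f = C a + C b * (X 0 - X 2) + C c * (X 1 - X 2) +
              C d * ((X 0 - X 1) * (X 0 - X 2) * (X 1 - X 2))) ∧
    LinearIndependent ℂ
      ![(1 : MvPolynomial (Fin 3) ℂ), X 0 - X 2, X 1 - X 2,
        (X 0 - X 1) * (X 0 - X 2) * (X 1 - X 2)] := by
  refine ⟨fun f ↦ ?_, linearIndependent_annihilatorBasis⟩
  rw [← mem_annihilator, ← span_annihilatorBasis, Submodule.mem_span_range_iff_exists_fun]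
  constructor
  · rintro ⟨c, rfl⟩
    exact ⟨c 0, c 1, c 2, c 3, by simp [Fin.sum_univ_four, annihilatorBasis, smul_eq_C_mul]⟩
  · rintro ⟨a, b, c, d, rfl⟩
    exact ⟨![a, b, c, d], by simp [Fin.sum_univ_four, annihilatorBasis, smul_eq_C_mul]⟩
end
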